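/- Let X = {x_1,…,x_{3q}} be a finite set with |X| = 3q (q ≥ 1), let 𝒞 = {C_1,…,C_m} be a collection of 3-element subsets of X, and let G(X,𝒞) be the associated graph. If G(X,𝒞) has a restrained dominating set of cardinality at most 2q, then 𝒞 contains an exact cover of X. -/
import Mathlib


/-- A set `D` is a restrained dominating set of `G` if every vertex not in `D`
is adjacent to a vertex in `D` and to a vertex outside `D`. -/
def IsRestrainedDominatingSet {V : Type*} (G : SimpleGraph V) (D : Finset V) : Prop :=
  (∀ v, v ∉ D → ∃ u ∈ D, G.Adj v u) ∧ (∀ v, v ∉ D → ∃ u, u ∉ D ∧ G.Adj v u)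

/-- The vertex type of the graph associated with an X3C instance: the elements
`x_1,…,x_{3q}`, the set-vertices `c_1,…,c_m`, the vertices `w_1,…,w_q`, the vertices
`z_1,…,z_q`, and the extra vertex `r`. -/
abbrev X3CVertex (q m : ℕ) := Fin (3 * q) ⊕ (Fin m ⊕ (Fin q ⊕ (Fin q ⊕ Unit)))

/-- The graph `G(X, 𝒞)` associated with an X3C instance `𝒞 : Fin m → Finset (Fin (3q))`:
edges `x_i c_j` for `x_i ∈ C_j`, all edges `c_i c_j` (a clique on the `c`'s),
edges from `r` to every `x_i`, every `c_j` and every `w_i`, and edges `w_i z_i`. -/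
def X3CGraph (q m : ℕ) (C : Fin m → Finset (Fin (3 * q))) : SimpleGraph (X3CVertex q m) :=
  SimpleGraph.fromRel (fun a b =>
    match a, b with
    | Sum.inl i, Sum.inr (Sum.inl j) => i ∈ C j
    | Sum.inr (Sum.inl _), Sum.inr (Sum.inl _) => True
    | Sum.inr (Sum.inr (Sum.inr (Sum.inr _))), Sum.inl _ => True
    | Sum.inr (Sum.inr (Sum.inr (Sum.inr _))), Sum.inr (Sum.inl _) => True
    | Sum.inr (Sum.inr (Sum.inr (Sum.inr _))), Sum.inr (Sum.inr (Sum.inl _)) => True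
    | Sum.inr (Sum.inr (Sum.inl i)), Sum.inr (Sum.inr (Sum.inr (Sum.inl j))) => i = j
    | _, _ => False)

/-- `s` is an exact cover of `X = Fin (3q)`: every element of `X` lies in exactly one
member `C_j` with `j ∈ s`. -/
def IsExactCover {q m : ℕ} (C : Fin m → Finset (Fin (3 * q))) (s : Finset (Fin m)) : Prop :=
  ∀ i : Fin (3 * q), ∃! j : Fin m, j ∈ s ∧ i ∈ C j

namespace X3Caux
variable {q m : ℕ} {C : Fin m → Finset (Fin (3*q))}

def xv (i : Fin (3*q)) : X3CVertex q m := Sum.inl i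
def cv (j : Fin m) : X3CVertex q m := Sum.inr (Sum.inl j)
def wv (i : Fin q) : X3CVertex q m := Sum.inr (Sum.inr (Sum.inl i))
def zv (i : Fin q) : X3CVertex q m := Sum.inr (Sum.inr (Sum.inr (Sum.inl i)))
def rv : X3CVertex q m := Sum.inr (Sum.inr (Sum.inr (Sum.inr ())))

lemma adj_zv (i : Fin q) (u : X3CVertex q m) :
    (X3CGraph q m C).Adj (zv i) u ↔ u = wv i := by
  rcases u with k | k | k | k | k <;>
    simp [X3CGraph, SimpleGraph.fromRel_adj, zv, wv, eq_comm]

lemma adj_wv (i : Fin q) (u : X3CVertex q m) :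
    (X3CGraph q m C).Adj (wv i) u ↔ u = rv ∨ u = zv i := by
  rcases u with k | k | k | k | k <;>
    simp [X3CGraph, SimpleGraph.fromRel_adj, zv, wv, rv, eq_comm]

lemma adj_xv (i : Fin (3*q)) (u : X3CVertex q m) :
    (X3CGraph q m C).Adj (xv i) u ↔ u = rv ∨ ∃ j, u = cv j ∧ i ∈ C j := by
  rcases u with k | k | k | k | k <;>
    simp [X3CGraph, SimpleGraph.fromRel_adj, xv, cv, rv, eq_comm]

lemma zv_inj : Function.Injective (zv (q := q) (m := m)) := by
  intro a b h; simpa [zv] using h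
lemma wv_inj : Function.Injective (wv (q := q) (m := m)) := by
  intro a b h; simpa [wv] using h
lemma cv_inj : Function.Injective (cv (q := q) (m := m)) := by
  intro a b h; simpa [cv] using h
lemma xv_inj : Function.Injective (xv (q := q) (m := m)) := by
  intro a b h; simpa [xv] using h

end X3Caux


open X3Caux in
/-- If `G(X,𝒞)` has a restrained dominating set of cardinality at most `2q`,
then `𝒞` contains an exact cover of `X`. -/
theorem stmt_18 (q m : ℕ) (hq : 1 ≤ q) (C : Fin m → Finset (Fin (3 * q)))
    (hC : ∀ j, (C j).card = 3)
    (hD : ∃ D : Finset (X3CVertex q m),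
      IsRestrainedDominatingSet (X3CGraph q m C) D ∧ D.card ≤ 2 * q) :
    ∃ s : Finset (Fin m), IsExactCover C s := by
  obtain ⟨D, ⟨hdom, hres⟩, hcard⟩ := hD
  -- every z_i is in D
  have hzD : ∀ i : Fin q, zv i ∈ D := by
    intro i
    by_contra hz
    obtain ⟨u, huD, hadj⟩ := hdom _ hz
    rw [adj_zv] at hadj
    obtain ⟨u', hu'D, hadj'⟩ := hres _ hz
    rw [adj_zv] at hadj'
    subst hadj hadj'
    exact hu'D huD
  -- r is not in D
  have hrD : (rv : X3CVertex q m) ∉ D := by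
    intro hr
    have hwD : ∀ i : Fin q, wv i ∈ D := by
      intro i
      by_contra hw
      obtain ⟨u, huD, hadj⟩ := hres _ hw
      rw [adj_wv] at hadj
      rcases hadj with rfl | rfl
      · exact huD hr
      · exact huD (hzD i)
    have hsub : insert (rv : X3CVertex q m)
        ((Finset.univ.image wv) ∪ (Finset.univ.image zv)) ⊆ D := by
      intro v hv
      simp only [Finset.mem_insert, Finset.mem_union, Finset.mem_image] at hv
      rcases hv with rfl | ⟨⟨i, _, rfl⟩ | ⟨i, _, rfl⟩⟩
      · exact hr
      · exact hwD i
      · exact hzD i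
    have hcard2 := Finset.card_le_card hsub
    rw [Finset.card_insert_of_notMem (by simp [rv, wv, zv]),
      Finset.card_union_of_disjoint (by simp [Finset.disjoint_left, wv, zv]),
      Finset.card_image_of_injective _ wv_inj,
      Finset.card_image_of_injective _ zv_inj] at hcard2
    simp at hcard2
    omega
  classical
  set s : Finset (Fin m) := Finset.univ.filter (fun j => cv j ∈ D) with hs
  set A : Finset (Fin (3*q)) := Finset.univ.filter (fun i => xv i ∈ D) with hA
  -- domination of x's
  have hcov : ∀ i : Fin (3*q), i ∈ A ∨ ∃ j ∈ s, i ∈ C j := by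
    intro i
    by_cases hx : xv i ∈ D
    · exact Or.inl (by simp [hA, hx])
    · obtain ⟨u, huD, hadj⟩ := hdom _ hx
      rw [adj_xv] at hadj
      rcases hadj with rfl | ⟨j, rfl, hij⟩
      · exact absurd huD hrD
      · exact Or.inr ⟨j, by simp [hs, huD], hij⟩
  -- cardinality accounting
  have hsub : (Finset.univ.image (zv)) ∪ ((s.image cv) ∪ (A.image xv)) ⊆ D := by
    intro v hv
    simp only [Finset.mem_union, Finset.mem_image] at hv
    rcases hv with ⟨i, _, rfl⟩ | ⟨⟨j, hj, rfl⟩ | ⟨i, hi, rfl⟩⟩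
    · exact hzD i
    · simpa [hs] using (Finset.mem_filter.mp hj).2
    · simpa [hA] using (Finset.mem_filter.mp hi).2
  have hcard3 := Finset.card_le_card hsub
  rw [Finset.card_union_of_disjoint (by simp [Finset.disjoint_left, zv, cv, xv]),
    Finset.card_union_of_disjoint (by simp [Finset.disjoint_left, cv, xv]),
    Finset.card_image_of_injective _ zv_inj,
    Finset.card_image_of_injective _ cv_inj,
    Finset.card_image_of_injective _ xv_inj] at hcard3
  simp only [Finset.card_univ, Fintype.card_fin] at hcard3
  have hbudget : s.card + A.card ≤ q := by omega
  -- covering count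
  have hsubU : (Finset.univ : Finset (Fin (3*q))) ⊆ A ∪ s.biUnion C := by
    intro i _
    rcases hcov i with h | ⟨j, hj, hij⟩
    · exact Finset.mem_union_left _ h
    · exact Finset.mem_union_right _ (Finset.mem_biUnion.mpr ⟨j, hj, hij⟩)
  have hcount : 3 * q ≤ A.card + 3 * s.card := by
    have h1 := Finset.card_le_card hsubU
    have h2 := Finset.card_union_le A (s.biUnion C)
    have h3 := Finset.card_biUnion_le (s := s) (t := C)
    simp only [Finset.card_univ, Fintype.card_fin] at h1
    have h4 : ∑ j ∈ s, (C j).card = 3 * s.card := by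
      simp [hC, mul_comm]
    omega
  have hA0 : A.card = 0 := by omega
  have hsq : s.card = q := by omega
  -- double counting for uniqueness
  have hsum : ∑ i : Fin (3*q), (s.filter (fun j => i ∈ C j)).card = 3 * q := by
    calc ∑ i : Fin (3*q), (s.filter (fun j => i ∈ C j)).card
        = ∑ i : Fin (3*q), ∑ j ∈ s, if i ∈ C j then 1 else 0 := by
          simp only [Finset.card_filter]
      _ = ∑ j ∈ s, ∑ i : Fin (3*q), if i ∈ C j then 1 else 0 := Finset.sum_comm
      _ = ∑ j ∈ s, (C j).card := by
          refine Finset.sum_congr rfl fun j _ => ?_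
          rw [Finset.sum_ite_mem]
          simp
      _ = 3 * q := by rw [Finset.sum_congr rfl fun j _ => hC j, Finset.sum_const, smul_eq_mul, hsq, mul_comm]
  have hge : ∀ i : Fin (3*q), 1 ≤ (s.filter (fun j => i ∈ C j)).card := by
    intro i
    rcases hcov i with h | ⟨j, hj, hij⟩
    · exfalso; have := Finset.card_pos.mpr ⟨i, h⟩; omega
    · exact Finset.card_pos.mpr ⟨j, Finset.mem_filter.mpr ⟨hj, hij⟩⟩
  have hone : ∀ i : Fin (3*q), (s.filter (fun j => i ∈ C j)).card = 1 := by
    by_contra h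
    push_neg at h
    obtain ⟨i0, hi0⟩ := h
    have hlt : ∑ i : Fin (3*q), (1 : ℕ) <
        ∑ i : Fin (3*q), (s.filter (fun j => i ∈ C j)).card := by
      refine Finset.sum_lt_sum (fun i _ => hge i) ⟨i0, Finset.mem_univ _, ?_⟩
      exact lt_of_le_of_ne (hge i0) (Ne.symm hi0)
    simp only [Finset.sum_const, Finset.card_univ, Fintype.card_fin, smul_eq_mul,
      mul_one] at hlt
    omega
  refine ⟨s, fun i => ?_⟩
  obtain ⟨j0, hj0⟩ := Finset.card_eq_one.mp (hone i)
  have hj0mem : j0 ∈ s.filter (fun j => i ∈ C j) := hj0 ▸ Finset.mem_singleton_self j0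
  obtain ⟨hj0s, hj0C⟩ := Finset.mem_filter.mp hj0mem
  refine ⟨j0, ⟨hj0s, hj0C⟩, fun y hy => ?_⟩
  have : y ∈ s.filter (fun j => i ∈ C j) := Finset.mem_filter.mpr ⟨hy.1, hy.2⟩
  rw [hj0] at this
  exact Finset.mem_singleton.mp this
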